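/- arXiv:2303.02359 — 5 statements merged into one kernel-verified Lean document; each statement's English description precedes it below -/
import Mathlib

section
/- (Hochschild identity) Let O be a commutative ring of prime characteristic p, f ∈ O and ν a derivation of O. Then in the associative ring End(O) of additive endomorphisms of O one has (fν)^p = f^p ν^p + (fν)^{p-1}(f) · ν, where fν denotes the endomorphism x ↦ f·ν(x). -/
open Finset MvPolynomial

section Helpers

variable {R A : Type*} [CommRing R] [CommRing A] [Algebra R A]

theorem iter_leibniz (d : Derivation R A A) (a b : A) (n : ℕ) :
    (⇑d)^[n] (a * b) =
      ∑ k ∈ range n.succ, n.choose k • ((⇑d)^[n - k] a * (⇑d)^[k] b) := by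
  induction n with
  | zero => simp [Finset.range]
  | succ n IH =>
    calc
      (⇑d)^[n + 1] (a * b) =
          d (∑ k ∈ range n.succ,
              n.choose k • ((⇑d)^[n - k] a * (⇑d)^[k] b)) := by
        rw [Function.iterate_succ_apply', IH]
      _ = (∑ k ∈ range n.succ,
            n.choose k • ((⇑d)^[n - k + 1] a * (⇑d)^[k] b)) +
          ∑ k ∈ range n.succ,
            n.choose k • ((⇑d)^[n - k] a * (⇑d)^[k + 1] b) := by
        rw [map_sum]
        simp_rw [map_nsmul, d.leibniz, smul_eq_mul, smul_add, sum_add_distrib]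
        rw [add_comm]
        congr 1
        · exact sum_congr rfl fun k _ => by
            rw [Function.iterate_succ_apply', mul_comm]
        · exact sum_congr rfl fun k _ => by
            rw [Function.iterate_succ_apply']
      _ = (∑ k ∈ range n.succ,
                n.choose k.succ • ((⇑d)^[n - k] a * (⇑d)^[k + 1] b)) +
              1 • ((⇑d)^[n + 1] a * (⇑d)^[0] b) +
            ∑ k ∈ range n.succ, n.choose k • ((⇑d)^[n - k] a * (⇑d)^[k + 1] b) := ?_
      _ = ((∑ k ∈ range n.succ, n.choose k • ((⇑d)^[n - k] a * (⇑d)^[k + 1] b)) +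
              ∑ k ∈ range n.succ,
                n.choose k.succ • ((⇑d)^[n - k] a * (⇑d)^[k + 1] b)) +
            1 • ((⇑d)^[n + 1] a * (⇑d)^[0] b) := by
        rw [add_comm, add_assoc]
      _ = (∑ i ∈ range n.succ,
              (n + 1).choose (i + 1) • ((⇑d)^[n + 1 - (i + 1)] a * (⇑d)^[i + 1] b)) +
            1 • ((⇑d)^[n + 1] a * (⇑d)^[0] b) := by
        simp_rw [Nat.choose_succ_succ, Nat.succ_sub_succ, add_smul, sum_add_distrib]
      _ = ∑ k ∈ range n.succ.succ,
            n.succ.choose k • ((⇑d)^[n.succ - k] a * (⇑d)^[k] b) := by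
        rw [sum_range_succ' _ n.succ, Nat.choose_zero_right, tsub_zero]
    congr
    refine (sum_range_succ' _ _).trans (congr_arg₂ (· + ·) ?_ ?_)
    · rw [sum_range_succ, Nat.choose_succ_self, zero_smul, add_zero]
      refine sum_congr rfl fun k hk => ?_
      rw [mem_range] at hk
      congr
      omega
    · rw [Nat.choose_zero_right, tsub_zero]

theorem iter_leibniz_charp {p : ℕ} [Fact p.Prime] {A : Type*} [CommRing A]
    [Algebra (ZMod p) A] (d : Derivation (ZMod p) A A) (a b : A) :
    (⇑d)^[p] (a * b) = (⇑d)^[p] a * b + a * (⇑d)^[p] b := by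
  have hp : p.Prime := Fact.out
  rw [iter_leibniz, sum_range_succ, Nat.choose_self, Nat.sub_self]
  have hsum : ∑ k ∈ range p, p.choose k • ((⇑d)^[p - k] a * (⇑d)^[k] b)
      = p.choose 0 • ((⇑d)^[p - 0] a * (⇑d)^[0] b) := by
    refine Finset.sum_eq_single_of_mem 0 (mem_range.mpr hp.pos) fun k hk hk0 => ?_
    have hdvd : p ∣ p.choose k := hp.dvd_choose_self hk0 (mem_range.mp hk)
    have hz : ((p.choose k : ℕ) : A) = 0 := by
      rw [← map_natCast (algebraMap (ZMod p) A),
        (ZMod.natCast_eq_zero_iff _ _).mpr hdvd, map_zero]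
    rw [nsmul_eq_mul, hz, zero_mul]
  rw [hsum]
  simp

theorem hom_comm_derivation {R S σ : Type*} [CommRing R] [CommRing S]
    (ψ : MvPolynomial σ R →+* S)
    (d : Derivation R (MvPolynomial σ R) (MvPolynomial σ R)) (e : S → S)
    (he0 : ∀ r, e (ψ (C r)) = 0)
    (headd : ∀ u v, e (u + v) = e u + e v)
    (hemul : ∀ u v, e (u * v) = u * e v + v * e u)
    (hX : ∀ s, ψ (d (X s)) = e (ψ (X s))) (q : MvPolynomial σ R) :
    ψ (d q) = e (ψ q) := by
  induction q using MvPolynomial.induction_on with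
  | C r =>
    have : (C r : MvPolynomial σ R) = algebraMap R _ r := rfl
    rw [this, Derivation.map_algebraMap, map_zero, ← this, he0]
  | add f g hf hg => rw [map_add, map_add, map_add, hf, hg, headd]
  | mul_X f s hf =>
    rw [Derivation.leibniz, smul_eq_mul, smul_eq_mul, map_add, map_mul, map_mul,
      map_mul, hemul, hf, hX]

end Helpers

namespace HochschildAux
variable (p : ℕ) [Fact p.Prime]

noncomputable def dA :
    Derivation (ZMod p) (MvPolynomial ℕ (ZMod p)) (MvPolynomial ℕ (ZMod p)) :=
  MvPolynomial.mkDerivation _ fun i => X (i + 1)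

noncomputable def DB :
    Derivation (ZMod p) (MvPolynomial (Fin 3 × ℕ) (ZMod p))
      (MvPolynomial (Fin 3 × ℕ) (ZMod p)) :=
  MvPolynomial.mkDerivation _ fun s => X (s.1, s.2 + 1)

theorem dA_X (i : ℕ) : dA p (X i) = X (i + 1) := MvPolynomial.mkDerivation_X _ _ _

theorem DB_X (i : Fin 3) (j : ℕ) : DB p (X (i, j)) = X (i, j + 1) :=
  MvPolynomial.mkDerivation_X _ _ _

theorem DB_iter_X (i : Fin 3) (j m : ℕ) :
    (⇑(DB p))^[m] (X (i, j)) = X (i, j + m) := by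
  induction m generalizing j with
  | zero => rfl
  | succ m ih =>
    rw [Function.iterate_succ_apply, DB_X, ih]
    congr 2
    omega

noncomputable def aa : ℕ → ℕ → MvPolynomial ℕ (ZMod p)
  | 0, 0 => 1
  | 0, _ + 1 => 0
  | n + 1, 0 => X 0 * dA p (aa n 0)
  | n + 1, k + 1 => X 0 * dA p (aa n (k + 1)) + X 0 * aa n k

theorem aa_succ_zero (n : ℕ) : aa p (n + 1) 0 = X 0 * dA p (aa p n 0) := by
  simp [aa]

theorem aa_succ_succ (n k : ℕ) :
    aa p (n + 1) (k + 1) = X 0 * dA p (aa p n (k + 1)) + X 0 * aa p n k := by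
  simp [aa]

theorem aa_zero (n : ℕ) : aa p n 0 = if n = 0 then 1 else 0 := by
  induction n with
  | zero => simp [aa]
  | succ n ih =>
    rw [aa_succ_zero, ih, if_neg (Nat.succ_ne_zero n)]
    split_ifs with h <;> simp

theorem aa_gt : ∀ n k, n < k → aa p n k = 0 := by
  intro n
  induction n with
  | zero =>
    intro k h
    cases k with
    | zero => omega
    | succ k => simp [aa]
  | succ n ih =>
    intro k h
    cases k with
    | zero => omega
    | succ k =>
      rw [aa_succ_succ, ih (k + 1) (by omega), ih k (by omega), map_zero]
      ring

theorem aa_diag (n : ℕ) : aa p n n = X 0 ^ n := by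
  induction n with
  | zero => simp [aa]
  | succ n ih =>
    rw [aa_succ_succ, aa_gt p n (n + 1) (by omega), map_zero, ih]
    ring

theorem aa_one (n : ℕ) : aa p (n + 1) 1 = (fun y => X 0 * dA p y)^[n] (X 0) := by
  induction n with
  | zero =>
    rw [aa_succ_succ, aa_gt p 0 1 (by omega), map_zero]
    simp [aa]
  | succ n ih =>
    rw [aa_succ_succ, aa_zero, if_neg (Nat.succ_ne_zero n), mul_zero, add_zero, ih,
      Function.iterate_succ_apply']

noncomputable def ι : MvPolynomial ℕ (ZMod p) →ₐ[ZMod p] MvPolynomial (Fin 3 × ℕ) (ZMod p) :=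
  aeval fun i => X ((0 : Fin 3), i)

theorem ι_X (i : ℕ) : ι p (X i) = X ((0 : Fin 3), i) := aeval_X _ _

theorem ι_comm (q : MvPolynomial ℕ (ZMod p)) : ι p (dA p q) = DB p (ι p q) := by
  refine hom_comm_derivation (ι p).toRingHom (dA p) (⇑(DB p)) ?_ (map_add _) ?_ ?_ q
  · intro r
    show DB p (ι p (C r)) = 0
    have h : (C r : MvPolynomial ℕ (ZMod p)) = algebraMap (ZMod p) _ r := rfl
    rw [h, AlgHom.commutes, Derivation.map_algebraMap]
  · intro u v
    rw [Derivation.leibniz, smul_eq_mul, smul_eq_mul]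
  · intro s
    show ι p (dA p (X s)) = DB p (ι p (X s))
    rw [dA_X, ι_X, ι_X, DB_X]

theorem ι_fd_comm (m : ℕ) (q : MvPolynomial ℕ (ZMod p)) :
    ι p ((fun y => X 0 * dA p y)^[m] q)
      = (fun y => X ((0 : Fin 3), 0) * DB p y)^[m] (ι p q) := by
  induction m generalizing q with
  | zero => rfl
  | succ m ih =>
    rw [Function.iterate_succ_apply, Function.iterate_succ_apply, ih]
    congr 1
    show ι p (X 0 * dA p q) = _
    rw [map_mul, ι_X, ι_comm]

theorem expand (n : ℕ) (z : MvPolynomial (Fin 3 × ℕ) (ZMod p)) :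
    (fun y => X ((0 : Fin 3), 0) * DB p y)^[n] z
      = ∑ k ∈ range (n + 1), ι p (aa p n k) * (⇑(DB p))^[k] z := by
  induction n with
  | zero => simp [aa]
  | succ n ih =>
    rw [Function.iterate_succ_apply', ih]
    show X ((0 : Fin 3), 0) * DB p _ = _
    rw [map_sum, Finset.mul_sum]
    simp_rw [Derivation.leibniz, smul_eq_mul, ← ι_comm, mul_add, sum_add_distrib]
    have hz0 : dA p (aa p n 0) = 0 := by
      rw [aa_zero]
      split_ifs <;> simp
    rw [sum_range_succ' (fun k => ι p (aa p (n + 1) k) * (⇑(DB p))^[k] z) (n + 1)]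
    have hf0 : ι p (aa p (n + 1) 0) * (⇑(DB p))^[0] z = 0 := by
      rw [aa_succ_zero, hz0, mul_zero, map_zero, zero_mul]
    rw [hf0, add_zero]
    simp_rw [aa_succ_succ, map_add, map_mul, ι_X, add_mul, sum_add_distrib]
    have hS1 : ∑ k ∈ range (n + 1),
          X ((0 : Fin 3), 0) * (ι p (aa p n k) * DB p ((⇑(DB p))^[k] z))
        = ∑ k ∈ range (n + 1),
          X ((0 : Fin 3), 0) * ι p (aa p n k) * (⇑(DB p))^[k + 1] z := by
      refine sum_congr rfl fun k _ => ?_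
      rw [Function.iterate_succ_apply']
      ring
    have hS2 : ∑ k ∈ range (n + 1),
          X ((0 : Fin 3), 0) * ((⇑(DB p))^[k] z * ι p (dA p (aa p n k)))
        = ∑ k ∈ range (n + 1),
          X ((0 : Fin 3), 0) * ι p (dA p (aa p n (k + 1))) * (⇑(DB p))^[k + 1] z := by
      rw [sum_range_succ' (fun k =>
          X ((0 : Fin 3), 0) * ((⇑(DB p))^[k] z * ι p (dA p (aa p n k)))) n,
        hz0, map_zero, mul_zero, mul_zero, add_zero,
        sum_range_succ (fun k =>
          X ((0 : Fin 3), 0) * ι p (dA p (aa p n (k + 1))) * (⇑(DB p))^[k + 1] z) n,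
        aa_gt p n (n + 1) (by omega), map_zero, map_zero, mul_zero, zero_mul, add_zero]
      exact sum_congr rfl fun k _ => by ring
    rw [hS1, hS2]
    ring

theorem vanish (k0 : ℕ) (h2 : 2 ≤ k0) (hklt : k0 < p) : ι p (aa p p k0) = 0 := by
  have hp : p.Prime := Fact.out
  -- the derivation δ = X(0,0) • DB
  set F : MvPolynomial (Fin 3 × ℕ) (ZMod p) := X ((0 : Fin 3), 0) with hF
  have hsmul : (fun y => F * DB p y) = ⇑(F • DB p) := by
    funext y
    rw [Derivation.coe_smul, Pi.smul_apply, smul_eq_mul]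
  -- master equation
  have key := iter_leibniz_charp (F • DB p) (X ((1 : Fin 3), 0)) (X ((2 : Fin 3), 0))
  rw [← hsmul, expand, expand, expand] at key
  simp_rw [iter_leibniz (DB p) (X ((1 : Fin 3), 0)) (X ((2 : Fin 3), 0)), DB_iter_X,
    zero_add, Finset.sum_mul, Finset.mul_sum] at key
  -- extraction hom
  set g : Fin 3 × ℕ → MvPolynomial (Fin 3 × ℕ) (ZMod p) := fun s =>
    ![fun j => X ((0 : Fin 3), j), fun j => if j = k0 - 1 then 1 else 0,
      fun j => if j = 1 then 1 else 0] s.1 s.2 with hg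
  have hg0 : ∀ j, g ((0 : Fin 3), j) = X ((0 : Fin 3), j) := fun j => rfl
  have hg1 : ∀ j, g ((1 : Fin 3), j) = if j = k0 - 1 then 1 else 0 := fun j => rfl
  have hg2 : ∀ j, g ((2 : Fin 3), j) = if j = 1 then 1 else 0 := fun j => rfl
  have key2 := congrArg (aeval (R := ZMod p) g) key
  have hφι : ∀ q, aeval (R := ZMod p) g (ι p q) = ι p q := by
    intro q
    have hcomp : (aeval (R := ZMod p) g).comp (ι p) = ι p := by
      apply MvPolynomial.algHom_ext
      intro i
      rw [AlgHom.comp_apply, ι_X, aeval_X, hg0]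
    exact AlgHom.congr_fun hcomp q
  simp only [map_add, map_sum, map_mul, map_nsmul, aeval_X, hφι, hg1, hg2] at key2
  -- compute left side of key2
  rw [Finset.sum_eq_single_of_mem k0 (mem_range.mpr (by omega)) ?hout] at key2
  case hout =>
    intro k hk hkne
    refine Finset.sum_eq_zero fun j hj => ?_
    rcases eq_or_ne j 1 with rfl | hj1
    · rw [if_neg (by rw [mem_range] at hj; omega), zero_mul, smul_zero, mul_zero]
    · rw [if_neg hj1, mul_zero, smul_zero, mul_zero]
  rw [Finset.sum_eq_single_of_mem 1 (mem_range.mpr (by omega)) ?hin] at key2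
  case hin =>
    intro j hj hjne
    rw [if_neg hjne, mul_zero, smul_zero, mul_zero]
  rw [if_pos rfl, if_pos rfl, Nat.choose_one_right, mul_one, if_neg (by omega),
    if_neg (by omega)] at key2
  simp only [mul_zero, zero_mul, Finset.sum_const_zero, add_zero] at key2
  -- key2 : ι p (aa p p k0) * (k0 • 1) = 0  (roughly)
  have hk0 : ((k0 : ℕ) : ZMod p) ≠ 0 := by
    rw [Ne, ZMod.natCast_eq_zero_iff]
    intro hdvd
    have := Nat.le_of_dvd (by omega) hdvd
    omega
  have hcast : (k0 • (1 : MvPolynomial (Fin 3 × ℕ) (ZMod p)))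
      = algebraMap (ZMod p) _ ((k0 : ℕ) : ZMod p) := by
    rw [nsmul_eq_mul, mul_one, map_natCast]
  rw [hcast] at key2
  calc ι p (aa p p k0)
      = ι p (aa p p k0) * (algebraMap (ZMod p) _ ((k0 : ℕ) : ZMod p)
          * algebraMap (ZMod p) _ (((k0 : ℕ) : ZMod p)⁻¹)) := by
        rw [← map_mul, mul_inv_cancel₀ hk0, map_one, mul_one]
    _ = (ι p (aa p p k0) * algebraMap (ZMod p) _ ((k0 : ℕ) : ZMod p))
          * algebraMap (ZMod p) _ (((k0 : ℕ) : ZMod p)⁻¹) := by ring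
    _ = 0 := by rw [key2, zero_mul]


theorem univ (z : MvPolynomial (Fin 3 × ℕ) (ZMod p)) :
    (fun y => X ((0 : Fin 3), 0) * DB p y)^[p] z
      = X ((0 : Fin 3), 0) ^ p * (⇑(DB p))^[p] z
        + (fun y => X ((0 : Fin 3), 0) * DB p y)^[p - 1] (X ((0 : Fin 3), 0)) * DB p z := by
  have hp : p.Prime := Fact.out
  have hp2 : 2 ≤ p := hp.two_le
  rw [expand]
  have hsplit : ∀ k ∈ range (p + 1), ι p (aa p p k) * (⇑(DB p))^[k] z
      = (if k = p then X ((0 : Fin 3), 0) ^ p * (⇑(DB p))^[p] z else 0)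
        + (if k = 1 then ι p (aa p p 1) * DB p z else 0) := by
    intro k hk
    rw [mem_range] at hk
    by_cases hk1 : k = 1
    · subst hk1
      rw [if_neg (by omega), if_pos rfl, zero_add, Function.iterate_one]
    by_cases hkp : k = p
    · subst hkp
      rw [if_pos rfl, if_neg hk1, add_zero, aa_diag, map_pow, ι_X]
    rw [if_neg hkp, if_neg hk1, add_zero]
    rcases Nat.eq_zero_or_pos k with rfl | hkpos
    · rw [aa_zero, if_neg (by omega), map_zero, zero_mul]
    · rw [vanish p k (by omega) (by omega), zero_mul]
  rw [Finset.sum_congr rfl hsplit, Finset.sum_add_distrib,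
    Finset.sum_ite_eq' (range (p + 1)) p, Finset.sum_ite_eq' (range (p + 1)) 1,
    if_pos (mem_range.mpr (by omega)), if_pos (mem_range.mpr (by omega))]
  congr 2
  have hpp : p = (p - 1) + 1 := by omega
  rw [show aa p p 1 = aa p ((p - 1) + 1) 1 from by rw [← hpp], aa_one, ι_fd_comm, ι_X]

end HochschildAux

/-- Hochschild identity: for a commutative ring `O` of prime characteristic `p`, `f ∈ O`
and a derivation `ν` of `O`, in the ring of additive endomorphisms of `O` one has
`(fν)^p = f^p ν^p + (fν)^{p-1}(f) · ν`. -/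
theorem stmt3 (p : ℕ) [Fact p.Prime] (O : Type*) [CommRing O] [CharP O p]
    (ν : Derivation ℤ O O) (f : O) :
    ∀ x : O, (fun y => f * ν y)^[p] x
      = f ^ p * (⇑ν)^[p] x + (fun y => f * ν y)^[p-1] f * ν x := by
  intro x
  letI : Algebra (ZMod p) O := ZMod.algebra O p
  haveI : NeZero p := ⟨(Fact.out : p.Prime).ne_zero⟩
  set g : Fin 3 × ℕ → O := fun s =>
    ![fun j => (⇑ν)^[j] f, fun j => (⇑ν)^[j] x, fun _ => 0] s.1 s.2 with hgdef
  set ψ : MvPolynomial (Fin 3 × ℕ) (ZMod p) →ₐ[ZMod p] O := aeval g with hψdef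
  have hg0 : ∀ j, g ((0 : Fin 3), j) = (⇑ν)^[j] f := fun _ => rfl
  have hg1 : ∀ j, g ((1 : Fin 3), j) = (⇑ν)^[j] x := fun _ => rfl
  have hg2 : ∀ j, g ((2 : Fin 3), j) = 0 := fun _ => rfl
  have hψcomm : ∀ q, ψ (HochschildAux.DB p q) = ν (ψ q) := by
    refine hom_comm_derivation ψ.toRingHom (HochschildAux.DB p) ⇑ν ?_ (map_add ν) ?_ ?_
    · intro r
      show ν (ψ (MvPolynomial.C r)) = 0
      obtain ⟨n, rfl⟩ := ZMod.natCast_zmod_surjective r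
      have h : ψ (MvPolynomial.C ((n : ℕ) : ZMod p)) = ((n : ℕ) : O) := by
        have h1 : (MvPolynomial.C ((n : ℕ) : ZMod p) : MvPolynomial (Fin 3 × ℕ) (ZMod p))
            = algebraMap (ZMod p) _ ((n : ℕ) : ZMod p) := rfl
        rw [h1, AlgHom.commutes, map_natCast]
      rw [h, ν.map_natCast]
    · intro u v
      rw [ν.leibniz, smul_eq_mul, smul_eq_mul]
    · rintro ⟨i, j⟩
      rw [HochschildAux.DB_X]
      show ψ (X (i, j + 1)) = ν (ψ (X (i, j)))
      rw [hψdef, MvPolynomial.aeval_X, MvPolynomial.aeval_X]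
      fin_cases i
      · show (⇑ν)^[j + 1] f = ν ((⇑ν)^[j] f)
        rw [Function.iterate_succ_apply']
      · show (⇑ν)^[j + 1] x = ν ((⇑ν)^[j] x)
        rw [Function.iterate_succ_apply']
      · show (0 : O) = ν 0
        rw [map_zero]
  have hψX00 : ψ (X ((0 : Fin 3), 0)) = f := by
    rw [hψdef, MvPolynomial.aeval_X, hg0]
    rfl
  have hψiter : ∀ (m : ℕ) q,
      ψ ((fun y => X ((0 : Fin 3), 0) * HochschildAux.DB p y)^[m] q)
        = (fun y => f * ν y)^[m] (ψ q) := by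
    intro m
    induction m with
    | zero => intro q; rfl
    | succ m ih =>
      intro q
      rw [Function.iterate_succ_apply, Function.iterate_succ_apply, ih]
      congr 1
      show ψ (X ((0 : Fin 3), 0) * HochschildAux.DB p q) = f * ν (ψ q)
      rw [map_mul, hψX00, hψcomm]
  have hψDiter : ∀ (m : ℕ) q, ψ ((⇑(HochschildAux.DB p))^[m] q) = (⇑ν)^[m] (ψ q) := by
    intro m
    induction m with
    | zero => intro q; rfl
    | succ m ih =>
      intro q
      rw [Function.iterate_succ_apply, Function.iterate_succ_apply, ih, hψcomm]
  have huniv := congrArg ψ (HochschildAux.univ p (X ((1 : Fin 3), 0)))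
  rw [map_add, map_mul, map_mul, map_pow, hψX00, hψiter, hψiter, hψDiter, hψcomm,
    hψX00] at huniv
  have hx : ψ (X ((1 : Fin 3), 0)) = x := by
    rw [hψdef, MvPolynomial.aeval_X, hg1]
    rfl
  rw [hx] at huniv
  exact huniv
end

section
/- Let Λ be an associative ring of prime characteristic p and Λ₁ a subset generating Λ as a ring. If D ∈ Λ₁ and D^{[p]} ∈ Λ satisfies ad(D^{[p]})(E) = ad(D)^p(E) for all E ∈ Λ₁, then ι(D) = D^p − D^{[p]} lies in the center of Λ. -/
/-!
Left and right multiplication by `a` are commuting elements of `Module.End ℤ A`, a ring into which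
`A` embeds by left multiplication and which therefore has the same exponential characteristic.
Hence `ad a = L_a - R_a` satisfies `(ad a)^(p^n) = L_a^(p^n) - R_a^(p^n) = ad (a^(p^n))`
(Jacobson's identity). Applied to `D`, the hypothesis says that `D^p - Dp` commutes with every
generator, and the centralizer of a generating set is the center.
-/

theorem iterate_commutator_expChar_pow {A : Type*} [Ring A] (p : ℕ) [ExpChar A p] (n : ℕ)
    (a b : A) :
    (fun x => a * x - x * a)^[p ^ n] b = a ^ p ^ n * b - b * a ^ p ^ n := by
  have : ExpChar (Module.End ℤ A) p :=
    expChar_of_injective_ringHom (f := (Algebra.lmul ℤ A).toRingHom) Algebra.lmul_injective p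
  have ad_eq : (fun x => a * x - x * a) = ⇑(LinearMap.mulLeft ℤ a - LinearMap.mulRight ℤ a) := rfl
  rw [ad_eq, ← Module.End.coe_pow,
    sub_pow_expChar_pow_of_commute p n (LinearMap.commute_mulLeft_right a a),
    LinearMap.pow_mulLeft, LinearMap.pow_mulRight]
  rfl

theorem Subring.mem_center_of_mem_centralizer_of_closure_eq_top {R : Type*} [Ring R]
    {s : Set R} (hs : Subring.closure s = ⊤) {c : R} (hc : c ∈ s.centralizer) :
    c ∈ Subring.center R :=
  Subring.mem_center_iff.mpr fun g =>
    Subring.closure_le_centralizer_centralizer s (hs ▸ Subring.mem_top g) c hc |>.symm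

theorem stmt7_general (p : ℕ) [Fact p.Prime] (Λ : Type*) [Ring Λ] [CharP Λ p]
    (Λ₁ : Set Λ) (hgen : Subring.closure Λ₁ = ⊤)
    (D : Λ) (Dp : Λ)
    (hDp : ∀ E ∈ Λ₁, Dp * E - E * Dp = (fun x => D * x - x * D)^[p] E) :
    D ^ p - Dp ∈ Subring.center Λ := by
  refine Subring.mem_center_of_mem_centralizer_of_closure_eq_top hgen fun E hE => ?_
  have jacobson : Dp * E - E * Dp = D ^ p * E - E * D ^ p := by
    rw [hDp E hE]
    simpa only [pow_one] using iterate_commutator_expChar_pow p 1 D E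
  rw [mul_sub, sub_mul]
  linear_combination (norm := abel) jacobson

/-- Let `Λ` be an associative unital ring of prime characteristic `p` and `Λ₁` a subset
generating `Λ` as a ring. If `D ∈ Λ₁` and `Dp ∈ Λ` satisfies
`ad(Dp)(E) = ad(D)^p(E)` for all `E ∈ Λ₁`, then `ι(D) = D^p − Dp` lies in the
center of `Λ`. -/
theorem stmt7 (p : ℕ) [Fact p.Prime] (Λ : Type*) [Ring Λ] [CharP Λ p]
    (Λ₁ : Set Λ) (hgen : Subring.closure Λ₁ = ⊤)
    (D : Λ) (hD : D ∈ Λ₁) (Dp : Λ)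
    (hDp : ∀ E ∈ Λ₁, Dp * E - E * Dp = (fun x => D * x - x * D)^[p] E) :
    D ^ p - Dp ∈ Subring.center Λ :=
  stmt7_general p Λ Λ₁ hgen D Dp hDp
end

section
/- Let Λ be an associative ring of prime characteristic p, O ⊆ Λ a commutative subring, and Λ₁ ⊇ O the set of elements D of Λ such that [D,f] ∈ O for all f ∈ O. Then for D ∈ Λ₁ and f ∈ O, the universal Lie polynomials satisfy s_i(D,f) = 0 for 1 ≤ i < p−1, and s_{p-1}(D,f) = δ_D^{p-1}(f), where δ_D(g)=[D,g]. -/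
open Finset Polynomial in
/-- Let `Λ` be an associative ring of prime characteristic `p`, `O ⊆ Λ` a commutative
subring, and `D ∈ Λ` with `[D,f] ∈ O` for all `f ∈ O`. Let `s_i` be the universal Lie
polynomials, characterized by `ad(tx+y)^{p-1}(x) = Σ_{i=1}^{p-1} i s_i(x,y) t^{i-1}`
in `Λ[t]`. Then `s_i(D,f) = 0` for `1 ≤ i < p−1`, and `s_{p-1}(D,f) = δ_D^{p-1}(f)`,
where `δ_D(g) = [D,g]`. -/
theorem stmt10 (p : ℕ) [Fact p.Prime] (Λ : Type*) [Ring Λ] [CharP Λ p]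
    (O : Subring Λ) (hOcomm : ∀ f ∈ O, ∀ g ∈ O, f * g = g * f)
    (D : Λ) (hD : ∀ f ∈ O, D * f - f * D ∈ O)
    (s : ℕ → Λ → Λ → Λ)
    (hs : ∀ x y : Λ,
      (fun z : Polynomial Λ => (C x * X + C y) * z - z * (C x * X + C y))^[p-1] (C x)
        = ∑ i ∈ Ico 1 p, i • (C (s i x y) * X ^ (i - 1))) :
    ∀ f ∈ O,
      (∀ i ∈ Ico 1 (p - 1), s i D f = 0) ∧
      s (p - 1) D f = (fun g => D * g - g * D)^[p-1] f := by
  intro f hf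
  have hp : p.Prime := Fact.out
  have hp2 : 2 ≤ p := hp.two_le
  set δ : Λ → Λ := fun g => D * g - g * D with hδ
  set F : Polynomial Λ → Polynomial Λ :=
    fun z : Polynomial Λ => (C D * X + C f) * z - z * (C D * X + C f) with hF
  -- membership of iterates
  have hmem : ∀ k, δ^[k] f ∈ O := by
    intro k
    induction k with
    | zero => simpa using hf
    | succ n ih =>
      rw [Function.iterate_succ_apply']
      exact hD _ ih
  -- key multiplication lemma
  have key : ∀ g : Λ, f * g = g * f → ∀ n : ℕ,
      F (C g * X ^ n) = C (D * g - g * D) * X ^ (n + 1) := by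
    intro g hg n
    show (C D * X + C f) * (C g * X ^ n) - (C g * X ^ n) * (C D * X + C f)
        = C (D * g - g * D) * X ^ (n + 1)
    simp only [C_mul_X_eq_monomial, C_mul_X_pow_eq_monomial]
    simp only [← monomial_zero_left]
    simp only [add_mul, mul_add, sub_mul, mul_sub, monomial_mul_monomial, hg]
    simp only [zero_add, add_zero]
    rw [monomial_sub]
    abel
  -- base case
  have base : F (C D) = C (-(δ f)) * X ^ 0 := by
    show (C D * X + C f) * C D - C D * (C D * X + C f) = C (-(δ f)) * X ^ 0
    simp only [C_mul_X_eq_monomial]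
    simp only [← monomial_zero_left]
    simp only [add_mul, mul_add, sub_mul, mul_sub, monomial_mul_monomial, pow_zero, mul_one]
    rw [hδ]
    simp only [neg_sub, monomial_sub]
    abel
  -- iterate formula
  have iter : ∀ k : ℕ, F^[k + 1] (C D) = C (-(δ^[k + 1] f)) * X ^ k := by
    intro k
    induction k with
    | zero => simpa using base
    | succ n ih =>
      rw [Function.iterate_succ_apply', ih]
      have hg : f * (-(δ^[n + 1] f)) = (-(δ^[n + 1] f)) * f := by
        rw [mul_neg, neg_mul, hOcomm f hf _ (hmem (n + 1))]
      rw [key _ hg n]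
      have h2 : δ^[n + 1 + 1] f = D * δ^[n + 1] f - δ^[n + 1] f * D := by
        rw [Function.iterate_succ_apply']
      have h3 : D * (-(δ^[n + 1] f)) - (-(δ^[n + 1] f)) * D
          = -(D * δ^[n + 1] f - δ^[n + 1] f * D) := by noncomm_ring
      rw [h3, h2]
  -- main equation
  have hiter : F^[p - 1] (C D) = C (-(δ^[p - 1] f)) * X ^ (p - 2) := by
    have h1 : p - 1 = (p - 2) + 1 := by omega
    rw [h1, iter (p - 2)]
  have E : C (-(δ^[p - 1] f)) * X ^ (p - 2)
      = ∑ i ∈ Ico 1 p, i • (C (s i D f) * X ^ (i - 1)) := by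
    rw [← hiter]
    exact hs D f
  -- coefficient extraction
  have coeffE : ∀ j : ℕ,
      (-if j = p - 2 then δ^[p - 1] f else 0)
        = ∑ i ∈ Ico 1 p, if j = i - 1 then (i : Λ) * s i D f else 0 := by
    intro j
    have := congrArg (fun q : Polynomial Λ => q.coeff j) E
    simpa [coeff_C_mul, coeff_X_pow, finset_sum_coeff, coeff_smul, mul_assoc,
      nsmul_eq_mul] using this
  -- the ring hom from ZMod p
  let φ : ZMod p →+* Λ := ZMod.castHom dvd_rfl Λ
  constructor
  · intro i hi
    simp only [mem_Ico] at hi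
    have h1 : (1 : ℕ) ≤ i := hi.1
    have h2 : i < p - 1 := hi.2
    have hc := coeffE (i - 1)
    have hne : i - 1 ≠ p - 2 := by omega
    rw [if_neg hne, neg_zero] at hc
    have hsingle : (∑ i' ∈ Ico 1 p, if i - 1 = i' - 1 then (i' : Λ) * s i' D f else 0)
        = (i : Λ) * s i D f := by
      rw [Finset.sum_eq_single i]
      · rw [if_pos rfl]
      · intro b hb hbne
        simp only [mem_Ico] at hb
        have : i - 1 ≠ b - 1 := by omega
        rw [if_neg this]
      · intro habs
        exfalso
        exact habs (mem_Ico.mpr ⟨h1, by omega⟩)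
    rw [hsingle] at hc
    replace hc := hc.symm
    -- invert (i : Λ)
    have hizero : ((i : ZMod p)) ≠ 0 := by
      rw [Ne, ZMod.natCast_eq_zero_iff]
      intro hdvd
      have := Nat.le_of_dvd (by omega) hdvd
      omega
    have hinv : φ ((i : ZMod p)⁻¹) * (i : Λ) = 1 := by
      have := congrArg φ (inv_mul_cancel₀ hizero)
      simpa [map_mul, map_natCast] using this
    calc s i D f = (φ ((i : ZMod p)⁻¹) * (i : Λ)) * s i D f := by rw [hinv, one_mul]
      _ = φ ((i : ZMod p)⁻¹) * ((i : Λ) * s i D f) := by rw [mul_assoc]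
      _ = 0 := by rw [hc, mul_zero]
  · have hc := coeffE (p - 2)
    rw [if_pos rfl] at hc
    have hsingle : (∑ i' ∈ Ico 1 p, if p - 2 = i' - 1 then (i' : Λ) * s i' D f else 0)
        = ((p - 1 : ℕ) : Λ) * s (p - 1) D f := by
      rw [Finset.sum_eq_single (p - 1)]
      · rw [if_pos (by omega)]
      · intro b hb hbne
        simp only [mem_Ico] at hb
        have : p - 2 ≠ b - 1 := by omega
        rw [if_neg this]
      · intro habs
        exfalso
        exact habs (mem_Ico.mpr ⟨by omega, by omega⟩)
    rw [hsingle] at hc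
    have hcast : ((p - 1 : ℕ) : Λ) = -1 := by
      have : ((p - 1 : ℕ) : Λ) = (p : Λ) - 1 := by
        push_cast [Nat.cast_sub (by omega : 1 ≤ p)]
        ring
      rw [this, CharP.cast_eq_zero, zero_sub]
    rw [hcast, neg_one_mul] at hc
    have := neg_injective hc.symm
    exact this
end

section
/- Let (H, [−,−], δ, [p]) be a restricted Lie algebroid over a commutative ring O of prime characteristic p, and let Λ_H be its universal enveloping algebra with (Λ_H)₁ = O ⊕ H. Then the map (f + D)^{[p]'} := f^p + D^{[p]} + δ_D^{p-1}(f) satisfies additivity with correction by Lie polynomials: (f₁+D₁+f₂+D₂)^{[p]'} = (f₁+D₁)^{[p]'} + (f₂+D₂)^{[p]'} + Σ_{i=1}^{p-1} s_i(f₁+D₁, f₂+D₂) in Λ_H. -/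
open Polynomial Finset

/-- Hochschild's formula. -/
theorem hochschild_pow {p : ℕ} [hp : Fact p.Prime] {O : Type*} [CommRing O]
    {Λ : Type*} [Ring Λ] [CharP Λ p] (φ : O →+* Λ) (d : O → O)
    (b : Λ) (hb : ∀ g : O, b * φ g - φ g * b = φ (d g)) (f : O) :
    (φ f + b) ^ p = φ f ^ p + b ^ p + φ (d^[p-1] f) := by
  have hp2 : 2 ≤ p := hp.out.two_le
  set a : Λ := φ f with ha
  set A : Λ[X] := C a * X + C b with hA
  -- the commutator operator
  set L : Module.End ℤ Λ[X] := LinearMap.mulLeft ℤ A with hL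
  set R0 : Module.End ℤ Λ[X] := LinearMap.mulRight ℤ A with hR0
  set u : Module.End ℤ Λ[X] := L - R0 with hu
  have hcomm : ∀ g : O, A * C (φ g) - C (φ g) * A = C (φ (d g)) := by
    intro g
    have h2 : a * φ g = φ g * a := by rw [ha, ← map_mul, ← map_mul, mul_comm]
    have : A * C (φ g) - C (φ g) * A
        = (C a * X * C (φ g) - C (φ g) * (C a * X)) + (C b * C (φ g) - C (φ g) * C b) := by
      rw [hA]; noncomm_ring
    rw [this]
    have hx : C a * X * C (φ g) = C (φ g) * (C a * X) := by
      rw [mul_assoc, X_mul, ← mul_assoc, ← C_mul, h2, C_mul, mul_assoc]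
    rw [hx, sub_self, zero_add, ← C_mul, ← C_mul, ← C_sub, hb g]
  have huapp : ∀ g : O, u (C (φ g)) = C (φ (d g)) := by
    intro g
    simp only [hu, LinearMap.sub_apply, hL, hR0, LinearMap.mulLeft_apply,
      LinearMap.mulRight_apply]
    exact hcomm g
  have hiter : ∀ (n : ℕ) (g : O), (u ^ n) (C (φ g)) = C (φ (d^[n] g)) := by
    intro n
    induction n with
    | zero => intro g; simp
    | succ n ih =>
      intro g
      rw [pow_succ', Module.End.mul_apply, ih g, huapp, ← Function.iterate_succ_apply' d]
  have hcomLR : Commute L R0 := LinearMap.commute_mulLeft_right A A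
  have hcomuR : Commute u R0 := hcomLR.sub_left (Commute.refl R0)
  have hLeq : L = u + R0 := by rw [hu]; abel
  have hopsum : ∑ k ∈ range p, L ^ k * R0 ^ (p - 1 - k)
      = ∑ j ∈ range p, (p.choose (j+1)) • (u ^ j * R0 ^ (p - 1 - j)) := by
    calc ∑ k ∈ range p, L ^ k * R0 ^ (p - 1 - k)
        = ∑ k ∈ range p, ∑ j ∈ range (k+1), (k.choose j) • (u ^ j * R0 ^ (p - 1 - j)) := by
          refine sum_congr rfl fun k hk => ?_
          rw [mem_range] at hk
          rw [hLeq, hcomuR.add_pow, sum_mul]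
          refine sum_congr rfl fun j hj => ?_
          rw [mem_range, Nat.lt_succ_iff] at hj
          have hjk : (k - j) + (p - 1 - k) = p - 1 - j := by omega
          calc u ^ j * R0 ^ (k - j) * (k.choose j : Module.End ℤ Λ[X]) * R0 ^ (p - 1 - k)
              = u ^ j * R0 ^ (k - j) * R0 ^ (p - 1 - k) * (k.choose j) := by
                rw [mul_assoc (u ^ j * R0 ^ (k - j)),
                  (Nat.cast_commute (k.choose j) (R0 ^ (p - 1 - k))).eq]
                simp [mul_assoc]
            _ = (k.choose j) • (u ^ j * R0 ^ (p - 1 - j)) := by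
                rw [mul_assoc (u ^ j), ← pow_add, hjk, nsmul_eq_mul,
                  (Nat.cast_commute (k.choose j) _).eq]
      _ = ∑ j ∈ range p, ∑ k ∈ Ico j p, (k.choose j) • (u ^ j * R0 ^ (p - 1 - j)) := by
          refine sum_comm' fun k j => ?_
          simp only [mem_range, mem_Ico, Nat.lt_succ_iff]
          omega
      _ = ∑ j ∈ range p, (p.choose (j+1)) • (u ^ j * R0 ^ (p - 1 - j)) := by
          refine sum_congr rfl fun j hj => ?_
          rw [← Finset.sum_smul]
          congr 1
          have hIco : Ico j p = Icc j (p - 1) := by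
            rw [← Finset.Ico_add_one_right_eq_Icc]
            congr 1
            omega
          rw [hIco, Nat.sum_Icc_choose]
          congr 1
          omega
  have happ : ∑ k ∈ range p, A ^ k * (C a * A ^ (p - 1 - k))
      = ∑ j ∈ range p, (p.choose (j+1)) • ((u ^ j) (C a * A ^ (p - 1 - j))) := by
    have h := congrArg (fun F : Module.End ℤ Λ[X] => F (C a)) hopsum
    simp only [LinearMap.coe_sum, Finset.sum_apply, Module.End.mul_apply,
      LinearMap.smul_apply] at h
    simpa only [hL, hR0, LinearMap.pow_mulLeft, LinearMap.pow_mulRight,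
      LinearMap.mulLeft_apply, LinearMap.mulRight_apply] using h
  have hsum : ∑ k ∈ range p, A ^ k * (C a * A ^ (p - 1 - k)) = C (φ (d^[p-1] f)) := by
    rw [happ, Finset.sum_eq_single_of_mem (p - 1) (by rw [mem_range]; omega)]
    · have h1 : p - 1 + 1 = p := by omega
      rw [h1, Nat.choose_self, Nat.sub_self, pow_zero, mul_one, one_smul]
      exact hiter (p - 1) f
    · intro j hj hne
      rw [mem_range] at hj
      obtain ⟨m, hm⟩ := hp.out.dvd_choose_self (by omega : j + 1 ≠ 0) (by omega : j + 1 < p)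
      rw [hm, mul_nsmul]
      have : p • ((u ^ j) (C a * A ^ (p - 1 - j))) = 0 := by
        rw [nsmul_eq_mul, CharP.cast_eq_zero Λ[X] p, zero_mul]
      rw [this, smul_zero]
  have hderA : derivative A = C a := by
    rw [hA]
    simp
  have hderpow : ∀ n : ℕ, derivative (A ^ n) = ∑ k ∈ range n, A ^ k * (C a * A ^ (n - 1 - k)) := by
    intro n
    induction n with
    | zero => simp
    | succ n ih =>
      rw [pow_succ, derivative_mul, ih, hderA, sum_mul, sum_range_succ]
      congr 1
      · refine sum_congr rfl fun k hk => ?_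
        rw [mem_range] at hk
        have h1 : n - 1 - k + 1 = n + 1 - 1 - k := by omega
        rw [mul_assoc, mul_assoc, ← pow_succ, h1]
      · have h0 : n + 1 - 1 - n = 0 := by omega
        rw [h0, pow_zero, mul_one]
  have hderAp : derivative (A ^ p) = C (φ (d^[p-1] f)) := by
    rw [hderpow p, hsum]
  -- coefficients
  have hndA : A.natDegree ≤ 1 := by
    rw [hA]
    refine (natDegree_add_le _ _).trans (max_le ?_ ?_)
    · exact natDegree_mul_le.trans (by simpa [natDegree_C] using natDegree_X_le)
    · simp [natDegree_C]
  have hhigh : ∀ n k : ℕ, n < k → (A ^ n).coeff k = 0 := by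
    intro n k hk
    refine coeff_eq_zero_of_natDegree_lt (lt_of_le_of_lt ?_ hk)
    calc (A ^ n).natDegree ≤ n * A.natDegree := natDegree_pow_le
      _ ≤ n * 1 := Nat.mul_le_mul_left n hndA
      _ = n := Nat.mul_one n
  have hc0 : ∀ n : ℕ, (A ^ n).coeff 0 = b ^ n := by
    intro n
    have hA0 : A.coeff 0 = b := by
      rw [hA]
      simp
    induction n with
    | zero => simp
    | succ n ih => rw [pow_succ, mul_coeff_zero, ih, hA0, pow_succ]
  have hcp : ∀ n : ℕ, (A ^ n).coeff n = a ^ n := by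
    intro n
    induction n with
    | zero => simp
    | succ n ih =>
      rw [pow_succ]
      have : A ^ n * A = A ^ n * (C a * X) + A ^ n * C b := by
        rw [hA, mul_add]
      rw [this, coeff_add, coeff_mul_C, hhigh n (n+1) (Nat.lt_succ_self n), zero_mul, add_zero,
        ← mul_assoc, coeff_mul_X, coeff_mul_C, ih, pow_succ]
  have hc1 : (A ^ p).coeff 1 = φ (d^[p-1] f) := by
    have h := coeff_derivative (A ^ p) 0
    rw [hderAp] at h
    simpa using h.symm
  have hmid : ∀ k : ℕ, 2 ≤ k → k < p → (A ^ p).coeff k = 0 := by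
    intro k h2 hkp
    have h := coeff_derivative (A ^ p) (k - 1)
    rw [hderAp] at h
    have hk1 : k - 1 + 1 = k := by omega
    rw [hk1, coeff_C, if_neg (by omega : ¬ (k - 1 = 0))] at h
    -- (A^p).coeff k * (k : Λ) = 0, and k is invertible mod p
    have hknz : ((k : ZMod p)) ≠ 0 := by
      rw [Ne, ZMod.natCast_eq_zero_iff]
      intro hdvd
      have := Nat.le_of_dvd (by omega) hdvd
      omega
    have hinv : (k : Λ) * (ZMod.castHom (dvd_refl p) Λ) (k : ZMod p)⁻¹ = 1 := by
      rw [← map_natCast (ZMod.castHom (dvd_refl p) Λ) k, ← map_mul,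
        mul_inv_cancel₀ hknz, map_one]
    have hcast : ((k - 1 : ℕ) : Λ) + 1 = (k : Λ) := by
      rw [← Nat.cast_succ]
      congr 1
    rw [hcast] at h
    calc (A ^ p).coeff k = (A ^ p).coeff k * ((k : Λ) * (ZMod.castHom (dvd_refl p) Λ) (k : ZMod p)⁻¹) := by
          rw [hinv, mul_one]
      _ = ((A ^ p).coeff k * (k : Λ)) * (ZMod.castHom (dvd_refl p) Λ) (k : ZMod p)⁻¹ := by
          rw [mul_assoc]
      _ = 0 := by rw [← h, zero_mul]
  -- assemble the polynomial
  have hpoly : A ^ p = C (a ^ p) * X ^ p + (C (φ (d^[p-1] f)) * X ^ 1 + C (b ^ p)) := by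
    ext k
    simp only [coeff_add, coeff_C_mul, coeff_X_pow, coeff_C]
    rcases Nat.lt_trichotomy k p with hk | hk | hk
    · rcases Nat.lt_or_ge k 2 with hk2 | hk2
      · interval_cases k
        · rw [hc0, if_neg (by omega : ¬ (0 = p)), if_neg (by omega : ¬ ((0:ℕ) = 1)),
            if_pos rfl]
          simp
        · rw [hc1, if_neg (by omega : ¬ (1 = p)), if_pos rfl,
            if_neg (by omega : ¬ ((1:ℕ) = 0))]
          simp
      · rw [hmid k hk2 hk, if_neg (by omega : ¬ (k = p)), if_neg (by omega : ¬ (k = 1)),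
          if_neg (by omega : ¬ (k = 0))]
        simp
    · subst hk
      rw [hcp, if_pos rfl, if_neg (by omega : ¬ (k = 1)), if_neg (by omega : ¬ (k = 0))]
      simp
    · rw [hhigh p k hk, if_neg (by omega : ¬ (k = p)), if_neg (by omega : ¬ (k = 1)),
        if_neg (by omega : ¬ (k = 0))]
      simp
  -- evaluate at 1
  let ev : Λ[X] →+* Λ := eval₂RingHom' (RingHom.id Λ) 1 fun r => Commute.one_right _
  have hevC : ∀ y : Λ, ev (C y) = y := fun y => by simp [ev]
  have hevX : ev X = 1 := by simp [ev]
  have hevA : ev A = a + b := by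
    rw [hA, map_add, map_mul, hevC, hevC, hevX, mul_one]
  have hr : ev (A ^ p) = a ^ p + (φ (d^[p-1] f) + b ^ p) := by
    rw [hpoly, pow_one, map_add, map_add, map_mul, map_mul, map_pow ev X p, hevX, hevC,
      hevC, hevC, one_pow, mul_one, mul_one]
  calc (a + b) ^ p = ev (A ^ p) := by rw [map_pow, hevA]
    _ = a ^ p + b ^ p + φ (d^[p-1] f) := by rw [hr]; abel

open Finset in
/-- Let `(H,[−,−],δ,[p])` be a restricted Lie algebroid over `O` of prime characteristic
`p` and `Λ_H` its universal enveloping algebra (generated by `O` and `H` with relations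
`Df − fD = δ_D(f)`, `D₁D₂ − D₂D₁ = [D₁,D₂]` and `(fD) = f·D`), with `(Λ_H)₁ = O ⊕ H`.
Then the map `(f + D)^{[p]'} := f^p + D^{[p]} + δ_D^{p-1}(f)` satisfies additivity with
correction by the universal Lie polynomials `s_i`:
`(f₁+D₁+f₂+D₂)^{[p]'} = (f₁+D₁)^{[p]'} + (f₂+D₂)^{[p]'} + Σ s_i(f₁+D₁, f₂+D₂)`. -/
theorem stmt12 (p : ℕ) [Fact p.Prime] (O : Type*) [CommRing O] [CharP O p]
    (H : Type*) [AddCommGroup H] [Module O H]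
    (br : H → H → H) (δ : H →ₗ[O] Derivation ℤ O O) (pm : H → H)
    (Λ : Type*) [Ring Λ] [CharP Λ p]
    (incO : O →+* Λ) (incH : H →+ Λ)
    (hsmul : ∀ (f : O) (D : H), incH (f • D) = incO f * incH D)
    (hanchor : ∀ (D : H) (f : O), incH D * incO f - incO f * incH D = incO (δ D f))
    (hbracket : ∀ D₁ D₂ : H,
      incH D₁ * incH D₂ - incH D₂ * incH D₁ = incH (br D₁ D₂))
    (s : ℕ → Λ → Λ → Λ)
    (hJacobson : ∀ x y : Λ, (x + y) ^ p = x ^ p + y ^ p + ∑ i ∈ Ico 1 p, s i x y)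
    (hpmadd : ∀ D₁ D₂ : H, incH (pm (D₁ + D₂))
      = incH (pm D₁) + incH (pm D₂) + ∑ i ∈ Ico 1 p, s i (incH D₁) (incH D₂)) :
    ∀ (f₁ f₂ : O) (D₁ D₂ : H),
      incO ((f₁ + f₂) ^ p) + incH (pm (D₁ + D₂))
          + incO ((⇑(δ (D₁ + D₂)))^[p-1] (f₁ + f₂))
        = (incO (f₁ ^ p) + incH (pm D₁) + incO ((⇑(δ D₁))^[p-1] f₁))
          + (incO (f₂ ^ p) + incH (pm D₂) + incO ((⇑(δ D₂))^[p-1] f₂))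
          + ∑ i ∈ Ico 1 p, s i (incO f₁ + incH D₁) (incO f₂ + incH D₂) := by
  intro f₁ f₂ D₁ D₂
  have hs : ∀ x y : Λ, ∑ i ∈ Ico 1 p, s i x y = (x + y) ^ p - x ^ p - y ^ p := by
    intro x y
    rw [hJacobson x y]
    abel
  have key : ∀ (f : O) (D : H), (incO f + incH D) ^ p
      = incO (f ^ p) + (incH D) ^ p + incO ((⇑(δ D))^[p-1] f) := by
    intro f D
    rw [map_pow incO f p]
    exact hochschild_pow incO (⇑(δ D)) (incH D) (fun g => hanchor D g) f
  have big : incO f₁ + incH D₁ + (incO f₂ + incH D₂) = incO (f₁ + f₂) + incH (D₁ + D₂) := by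
    rw [map_add, map_add]
    abel
  rw [hpmadd D₁ D₂]
  simp only [hs]
  rw [big, key (f₁ + f₂) (D₁ + D₂), key f₁ D₁, key f₂ D₂,
    show incH D₁ + incH D₂ = incH (D₁ + D₂) from (map_add incH D₁ D₂).symm]
  abel
end

section
/- Let Λ be a restricted sheaf of rings of differential operators with p-structures [p] and [p]'. Then the difference φ(D) = D^{[p]} − D^{[p]'} defines a p-linear map φ : H → Z(Λ₁) from H = Λ₁/Λ₀ to the centralizer of Λ₁ in Λ₁: φ is additive, φ(fD) = f^p φ(D), φ vanishes on Λ₀, and ad(φ(D))(E) = 0 for all E ∈ Λ₁. Conversely, given a p-structure [p] and any p-linear map φ : H → Z(Λ₁), the map D ↦ D^{[p]} + φ(sb(D)) is again a p-structure. -/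
/-!
Each axiom of a `p`-structure is affine in `D^{[p]}`, with the remaining terms (`ad(D)^p`, the Lie
polynomials `s i`, `δ_{fD}^{p-1}(f) D`, `f ^ p`) independent of the choice of `[p]`. They cancel
in the difference of two `p`-structures, leaving exactly `p`-linearity and centrality, and
conversely they are unaffected by adding a central `p`-linear map.
-/

open Finset in
/-- A `p`-structure on a sheaf of rings of differential operators, rendered algebraically:
`Λ` an associative ring, `O = Λ₀` a commutative subring, `Λ₁` an additive subgroup with
`O ⊆ Λ₁`, `s` the universal Lie polynomials. The four axioms are:
`ad(D^{[p]}) = ad(D)^p` on `Λ₁`, Jacobson-compatible additivity,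
`(fD)^{[p]} = f^p D^{[p]} + δ_{fD}^{p-1}(f) D`, and `f^{[p]} = f^p`. -/
def IsPStructure (p : ℕ) {Λ : Type*} [Ring Λ] (O : Subring Λ) (Λ₁ : AddSubgroup Λ)
    (s : ℕ → Λ → Λ → Λ) (pm : Λ → Λ) : Prop :=
  (∀ D ∈ Λ₁, pm D ∈ Λ₁) ∧
  (∀ D ∈ Λ₁, ∀ E ∈ Λ₁, pm D * E - E * pm D = (fun z => D * z - z * D)^[p] E) ∧
  (∀ D₁ ∈ Λ₁, ∀ D₂ ∈ Λ₁,
    pm (D₁ + D₂) = pm D₁ + pm D₂ + ∑ i ∈ Ico 1 p, s i D₁ D₂) ∧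
  (∀ f ∈ O, ∀ D ∈ Λ₁, pm (f * D)
    = f ^ p * pm D + (fun z => (f * D) * z - z * (f * D))^[p-1] f * D) ∧
  (∀ f ∈ O, pm f = f ^ p)

/-- Vanishing on `O` encodes that `φ` factors through `H = Λ₁ / Λ₀`. -/
structure IsCentralPLinear (p : ℕ) {Λ : Type*} [Ring Λ] (O : Subring Λ) (Λ₁ : AddSubgroup Λ)
    (φ : Λ → Λ) : Prop where
  map_mem : ∀ D ∈ Λ₁, φ D ∈ Λ₁
  map_add : ∀ D₁ ∈ Λ₁, ∀ D₂ ∈ Λ₁, φ (D₁ + D₂) = φ D₁ + φ D₂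
  map_mul : ∀ f ∈ O, ∀ D ∈ Λ₁, φ (f * D) = f ^ p * φ D
  map_of_mem : ∀ f ∈ O, φ f = 0
  commute : ∀ D ∈ Λ₁, ∀ E ∈ Λ₁, φ D * E = E * φ D

namespace IsPStructure

variable {p : ℕ} {Λ : Type*} [Ring Λ] {O : Subring Λ} {Λ₁ : AddSubgroup Λ}
  {s : ℕ → Λ → Λ → Λ} {pm pm' φ : Λ → Λ}

theorem isCentralPLinear_sub (h : IsPStructure p O Λ₁ s pm) (h' : IsPStructure p O Λ₁ s pm') :
    IsCentralPLinear p O Λ₁ (fun D => pm D - pm' D) := by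
  obtain ⟨mem, ad, add, mul, base⟩ := h
  obtain ⟨mem', ad', add', mul', base'⟩ := h'
  refine ⟨fun D hD => Λ₁.sub_mem (mem D hD) (mem' D hD), ?_, ?_, ?_, ?_⟩
  · intro D₁ hD₁ D₂ hD₂
    rw [add D₁ hD₁ D₂ hD₂, add' D₁ hD₁ D₂ hD₂]
    abel
  · intro f hf D hD
    rw [mul f hf D hD, mul' f hf D hD, mul_sub]
    abel
  · intro f hf
    rw [base f hf, base' f hf, sub_self]
  · intro D hD E hE
    rw [← sub_eq_zero]
    calc (pm D - pm' D) * E - E * (pm D - pm' D)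
        = (pm D * E - E * pm D) - (pm' D * E - E * pm' D) := by noncomm_ring
      _ = 0 := by rw [ad D hD E hE, ad' D hD E hE, sub_self]

theorem add_isCentralPLinear (h : IsPStructure p O Λ₁ s pm) (hφ : IsCentralPLinear p O Λ₁ φ) :
    IsPStructure p O Λ₁ s (fun D => pm D + φ D) := by
  obtain ⟨mem, ad, add, mul, base⟩ := h
  refine ⟨fun D hD => Λ₁.add_mem (mem D hD) (hφ.map_mem D hD), ?_, ?_, ?_, ?_⟩
  · intro D hD E hE
    calc (pm D + φ D) * E - E * (pm D + φ D)
        = (pm D * E - E * pm D) + (φ D * E - E * φ D) := by noncomm_ring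
      _ = _ := by rw [hφ.commute D hD E hE, sub_self, add_zero, ad D hD E hE]
  · intro D₁ hD₁ D₂ hD₂
    beta_reduce
    rw [add D₁ hD₁ D₂ hD₂, hφ.map_add D₁ hD₁ D₂ hD₂]
    abel
  · intro f hf D hD
    beta_reduce
    rw [mul f hf D hD, hφ.map_mul f hf D hD, mul_add]
    abel
  · intro f hf
    beta_reduce
    rw [base f hf, hφ.map_of_mem f hf, add_zero]

end IsPStructure

open Finset in
theorem stmt14_general (p : ℕ) (Λ : Type*) [Ring Λ]
    (O : Subring Λ)
    (Λ₁ : AddSubgroup Λ)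
    (s : ℕ → Λ → Λ → Λ) :
    -- the difference of two p-structures is p-linear into the centralizer,
    -- vanishing on Λ₀ (hence factoring through H = Λ₁/Λ₀)
    (∀ pm pm' : Λ → Λ, IsPStructure p O Λ₁ s pm → IsPStructure p O Λ₁ s pm' →
      (∀ D₁ ∈ Λ₁, ∀ D₂ ∈ Λ₁,
        (pm (D₁ + D₂) - pm' (D₁ + D₂)) = (pm D₁ - pm' D₁) + (pm D₂ - pm' D₂)) ∧
      (∀ f ∈ O, ∀ D ∈ Λ₁, pm (f * D) - pm' (f * D) = f ^ p * (pm D - pm' D)) ∧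
      (∀ f ∈ O, pm f - pm' f = 0) ∧
      (∀ D ∈ Λ₁, ∀ E ∈ Λ₁, (pm D - pm' D) * E = E * (pm D - pm' D))) ∧
    -- conversely, adding a p-linear map into the centralizer which vanishes on Λ₀
    -- gives again a p-structure
    (∀ (pm φ : Λ → Λ), IsPStructure p O Λ₁ s pm →
      (∀ D ∈ Λ₁, φ D ∈ Λ₁) →
      (∀ D₁ ∈ Λ₁, ∀ D₂ ∈ Λ₁, φ (D₁ + D₂) = φ D₁ + φ D₂) →
      (∀ f ∈ O, ∀ D ∈ Λ₁, φ (f * D) = f ^ p * φ D) →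
      (∀ f ∈ O, φ f = 0) →
      (∀ D ∈ Λ₁, ∀ E ∈ Λ₁, φ D * E = E * φ D) →
      IsPStructure p O Λ₁ s (fun D => pm D + φ D)) := by
  refine ⟨fun pm pm' h h' => ?_, fun pm φ h mem add mul base comm => ?_⟩
  · have hφ := h.isCentralPLinear_sub h'
    exact ⟨hφ.map_add, hφ.map_mul, hφ.map_of_mem, hφ.commute⟩
  · exact h.add_isCentralPLinear ⟨mem, add, mul, base, comm⟩

open Finset in
/-- Classification of `p`-structures: the difference of two `p`-structures is a `p`-linear
map `φ : H = Λ₁/Λ₀ → Z(Λ₁)` (additive, `φ(fD) = f^p φ(D)`, vanishing on `Λ₀`, with values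
commuting with all of `Λ₁`); conversely, adding such a `φ ∘ sb` to a `p`-structure yields
again a `p`-structure. -/
theorem stmt14 (p : ℕ) [Fact p.Prime] (Λ : Type*) [Ring Λ] [CharP Λ p]
    (O : Subring Λ) (hOcomm : ∀ f ∈ O, ∀ g ∈ O, f * g = g * f)
    (Λ₁ : AddSubgroup Λ) (hOΛ₁ : (O : Set Λ) ⊆ Λ₁)
    (hmul : ∀ f ∈ O, ∀ D ∈ Λ₁, f * D ∈ Λ₁)
    (hcomm : ∀ D ∈ Λ₁, ∀ f ∈ O, D * f - f * D ∈ O)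
    (s : ℕ → Λ → Λ → Λ)
    (hJacobson : ∀ x y : Λ, (x + y) ^ p = x ^ p + y ^ p + ∑ i ∈ Ico 1 p, s i x y) :
    -- the difference of two p-structures is p-linear into the centralizer,
    -- vanishing on Λ₀ (hence factoring through H = Λ₁/Λ₀)
    (∀ pm pm' : Λ → Λ, IsPStructure p O Λ₁ s pm → IsPStructure p O Λ₁ s pm' →
      (∀ D₁ ∈ Λ₁, ∀ D₂ ∈ Λ₁,
        (pm (D₁ + D₂) - pm' (D₁ + D₂)) = (pm D₁ - pm' D₁) + (pm D₂ - pm' D₂)) ∧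
      (∀ f ∈ O, ∀ D ∈ Λ₁, pm (f * D) - pm' (f * D) = f ^ p * (pm D - pm' D)) ∧
      (∀ f ∈ O, pm f - pm' f = 0) ∧
      (∀ D ∈ Λ₁, ∀ E ∈ Λ₁, (pm D - pm' D) * E = E * (pm D - pm' D))) ∧
    -- conversely, adding a p-linear map into the centralizer which vanishes on Λ₀
    -- gives again a p-structure
    (∀ (pm φ : Λ → Λ), IsPStructure p O Λ₁ s pm →
      (∀ D ∈ Λ₁, φ D ∈ Λ₁) →
      (∀ D₁ ∈ Λ₁, ∀ D₂ ∈ Λ₁, φ (D₁ + D₂) = φ D₁ + φ D₂) →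
      (∀ f ∈ O, ∀ D ∈ Λ₁, φ (f * D) = f ^ p * φ D) →
      (∀ f ∈ O, φ f = 0) →
      (∀ D ∈ Λ₁, ∀ E ∈ Λ₁, φ D * E = E * φ D) →
      IsPStructure p O Λ₁ s (fun D => pm D + φ D)) :=
  stmt14_general p Λ O Λ₁ s
end
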